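/- arXiv:2306.15048 — 2 statements merged into one kernel-verified Lean document; each statement's English description precedes it below -/
import Mathlib

section
/- Let Q0 and Q1 be the left-continuous quantile functions of cdfs F0 and F1, let U ~ Uniform(0,1), and let Δ = sup over x in (a,b) of max(x - a - F1(Q0(x)), 0) for 0 ≤ a < b ≤ 1 (assume Δ < b - a). If U1 is defined so that U1 = U - a - Δ whenever a + Δ < U < b, then for every u in (a + Δ, b), Q1(u - a - Δ) ≤ Q0(u); that is, no individual with rank u in (a+Δ, b) is a winner under the coupling Y1 = Q1(U1), Y0 = Q0(U). -/
open MeasureTheory Set Filter Function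

noncomputable section

/-- `F` is a cumulative distribution function. -/
def IsCDF (F : ℝ → ℝ) : Prop :=
  Monotone F ∧ (∀ y, ContinuousWithinAt F (Set.Ici y) y) ∧
    Tendsto F atBot (nhds 0) ∧ Tendsto F atTop (nhds 1)

/-! The winner-free region comes from the Galois-connection half of the quantile,
`t ≤ F₁ y → Q₁ t ≤ y`, applied at `y = Q₀ u`: by the definition of `Δ` as a supremum,
`u - a - Δ ≤ F₁ (Q₀ u)` for every `u ∈ (a, b)`. -/

theorem le_biSup_of_bddAbove {α β : Type*} [ConditionallyCompleteLattice α] {f : β → α}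
    {s : Set β} (hf : BddAbove (f '' s)) {x : β} (hx : x ∈ s) : f x ≤ ⨆ y ∈ s, f y :=
  le_ciSup₂ (f := fun y _ => f y)
    (hf.mono <| iUnion_subset fun _ => range_subset_iff.2 fun hy => mem_image_of_mem f hy) x hx

namespace IsCDF

variable {F : ℝ → ℝ}

theorem nonneg (hF : IsCDF F) (y : ℝ) : 0 ≤ F y :=
  le_of_tendsto hF.2.2.1 (eventually_atBot.2 ⟨y, fun _ hz => hF.1 hz⟩)

theorem bddBelow_setOf_le (hF : IsCDF F) {t : ℝ} (ht : 0 < t) : BddBelow {y | t ≤ F y} := by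
  obtain ⟨y₀, hy₀⟩ := (hF.2.2.1.eventually (gt_mem_nhds ht)).exists
  exact ⟨y₀, fun y hy => le_of_not_gt fun hlt => (hy.trans (hF.1 hlt.le)).not_gt hy₀⟩

theorem sInf_setOf_le_le (hF : IsCDF F) {t y : ℝ} (ht : 0 < t) (hy : t ≤ F y) :
    sInf {y | t ≤ F y} ≤ y :=
  csInf_le (hF.bddBelow_setOf_le ht) hy

end IsCDF

theorem winner_lower_bound_attained_general
    (F1 Q0 Q1 : ℝ → ℝ) (hF1 : IsCDF F1)
    (hQ1 : ∀ u, Q1 u = sInf {y : ℝ | u ≤ F1 y})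
    (a b : ℝ)
    (Δ : ℝ) (hΔdef : Δ = ⨆ x ∈ Set.Ioo a b, max (x - a - F1 (Q0 x)) 0) :
    ∀ u ∈ Set.Ioo (a + Δ) b, Q1 (u - a - Δ) ≤ Q0 u := by
  rintro u ⟨hΔu, hub⟩
  have hΔ_nonneg : 0 ≤ Δ :=
    hΔdef ▸ Real.iSup_nonneg fun _ => Real.iSup_nonneg fun _ => le_max_right _ _
  have hbdd : BddAbove ((fun x => max (x - a - F1 (Q0 x)) 0) '' Ioo a b) := by
    refine ⟨max (b - a) 0, ?_⟩
    rintro _ ⟨x, hx, rfl⟩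
    exact max_le_max (by linarith [hx.2, hF1.nonneg (Q0 x)]) le_rfl
  have hgap : u - a - F1 (Q0 u) ≤ Δ :=
    hΔdef ▸ (le_max_left _ _).trans (le_biSup_of_bddAbove hbdd ⟨by linarith, hub⟩)
  rw [hQ1]
  exact hF1.sInf_setOf_le_le (by linarith) (by linarith)

theorem winner_lower_bound_attained
    (F0 F1 Q0 Q1 : ℝ → ℝ) (hF0 : IsCDF F0) (hF1 : IsCDF F1)
    (hQ0 : ∀ u, Q0 u = sInf {y : ℝ | u ≤ F0 y})
    (hQ1 : ∀ u, Q1 u = sInf {y : ℝ | u ≤ F1 y})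
    (a b : ℝ) (ha : 0 ≤ a) (hab : a < b) (hb : b ≤ 1)
    (Δ : ℝ) (hΔdef : Δ = ⨆ x ∈ Set.Ioo a b, max (x - a - F1 (Q0 x)) 0)
    (hΔ : Δ < b - a) :
    ∀ u ∈ Set.Ioo (a + Δ) b, Q1 (u - a - Δ) ≤ Q0 u :=
  winner_lower_bound_attained_general F1 Q0 Q1 hF1 hQ1 a b Δ hΔdef
end
end

section
/- Let Q0, Q1 be left-continuous quantile functions of cdfs F0, F1 and 0 ≤ a < b ≤ 1. For Y0 = Q0(U), U ~ Uniform(0,1), and Y1 with cdf F1 under any coupling, ∫_a^b max(Q0(u) - Q1(1-b+u), 0) du ≤ E[max(Y0 - Y1, 0) · 1{a < U < b}] ≤ ∫_a^b max(Q0(u) - Q1(b-u), 0) du. -/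
/-!
Write `(x - y)₊ = λ[y, x)` and swap the integrals (Fubini). Since `t < Q₀ u ↔ F₀ t < u` on
`(0, 1)`, the middle quantity becomes `∫ P(max a (F₀ t) < U < b, Y₁ ≤ t) dt`, the integrand being
the probability of the intersection of an event of probability `(b - max a (F₀ t))₊` with one of
probability `F₁ t`. The Fréchet–Hoeffding bounds `(p + q - 1)₊ ≤ P(A ∩ B) ≤ min p q` are exactly
what the same computation gives for the quantile couplings `u ↦ Q₁ (1 - b + u)` and
`u ↦ Q₁ (b - u)` on `(a, b)`.
-/

open MeasureTheory Set Filter Function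

noncomputable section

/-- Outside `(0, 1)` the value is junk: `sInf` of an empty or unbounded set. -/
def quantile (F : ℝ → ℝ) (u : ℝ) : ℝ :=
  sInf {y : ℝ | u ≤ F y}

open scoped Topology

section Quantile

variable {F : ℝ → ℝ} {u t a b : ℝ}

theorem IsCDF.quantile_le_iff (hF : IsCDF F) (hu : u ∈ Ioo 0 1) (t : ℝ) :
    quantile F u ≤ t ↔ u ≤ F t := by
  have hne : {y | u ≤ F y}.Nonempty :=
    (hF.2.2.2.eventually (eventually_gt_nhds hu.2)).exists.imp fun _ h => h.le
  have hbdd : BddBelow {y | u ≤ F y} := by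
    obtain ⟨y₀, hy₀⟩ := (hF.2.2.1.eventually (eventually_lt_nhds hu.1)).exists
    exact ⟨y₀, fun y hy => le_of_not_gt fun hlt => (hy.trans (hF.1 hlt.le)).not_gt hy₀⟩
  -- right-continuity of `F` makes the infimum attained
  have hattained : u ≤ F (sInf {y | u ≤ F y}) := by
    have : (𝓝[{y | u ≤ F y}] sInf {y | u ≤ F y}).NeBot :=
      mem_closure_iff_nhdsWithin_neBot.mp (csInf_mem_closure hne hbdd)
    exact ge_of_tendsto ((hF.2.1 _).mono fun y hy => csInf_le hbdd hy)
      (eventually_nhdsWithin_of_forall fun y hy => hy)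
  exact ⟨fun h => hattained.trans (hF.1 h), fun h => csInf_le hbdd h⟩

theorem IsCDF.lt_quantile_iff (hF : IsCDF F) (hu : u ∈ Ioo 0 1) (t : ℝ) :
    t < quantile F u ↔ F t < u := by
  simpa only [not_le] using (hF.quantile_le_iff hu t).not

theorem IsCDF.monotoneOn_quantile (hF : IsCDF F) : MonotoneOn (quantile F) (Ioo 0 1) :=
  fun _ hu _ hv huv => (hF.quantile_le_iff hu _).2 (huv.trans ((hF.quantile_le_iff hv _).1 le_rfl))

theorem IsCDF.lt_quantile_and_mem_Ioo_iff (hF : IsCDF F) (ha : 0 ≤ a) (hb : b ≤ 1) :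
    t < quantile F u ∧ u ∈ Ioo a b ↔ u ∈ Ioo (max a (F t)) b := by
  constructor
  · rintro ⟨ht, hu⟩
    exact ⟨max_lt hu.1 ((hF.lt_quantile_iff (Ioo_subset_Ioo ha hb hu) t).1 ht), hu.2⟩
  · rintro ⟨hmu, hub⟩
    have hu : u ∈ Ioo a b := ⟨(le_max_left _ _).trans_lt hmu, hub⟩
    exact ⟨(hF.lt_quantile_iff (Ioo_subset_Ioo ha hb hu) t).2 ((le_max_right _ _).trans_lt hmu), hu⟩

theorem IsCDF.aemeasurable_quantile_comp {X : Type*} [MeasurableSpace X] {ν : Measure X}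
    (hF : IsCDF F) {V : X → ℝ} (hV : Measurable V) (hV01 : ∀ᵐ x ∂ν, V x ∈ Ioo 0 1) :
    AEMeasurable (fun x => quantile F (V x)) ν := by
  have hmap : (ν.map V).restrict (Ioo 0 1) = ν.map V :=
    Measure.restrict_eq_self_of_ae_mem ((ae_map_iff hV.aemeasurable measurableSet_Ioo).2 hV01)
  have hQ := aemeasurable_restrict_of_monotoneOn (μ := ν.map V) measurableSet_Ioo
    hF.monotoneOn_quantile
  rw [hmap] at hQ
  exact hQ.comp_measurable hV

end Quantile

theorem lintegral_ofReal_sub_eq_lintegral_measure {X : Type*} [MeasurableSpace X]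
    {ν : Measure X} [SFinite ν] {g h : X → ℝ} (hg : AEMeasurable g ν) (hh : AEMeasurable h ν) :
    ∫⁻ x, ENNReal.ofReal (g x - h x) ∂ν = ∫⁻ t, ν {x | h x ≤ t ∧ t < g x} := by
  set E : Set (X × ℝ) := {p | hh.mk h p.1 ≤ p.2 ∧ p.2 < hg.mk g p.1}
  have hE : MeasurableSet E :=
    (measurableSet_le (hh.measurable_mk.comp measurable_fst) measurable_snd).inter
      (measurableSet_lt measurable_snd (hg.measurable_mk.comp measurable_fst))
  calc ∫⁻ x, ENNReal.ofReal (g x - h x) ∂ν = ∫⁻ x, volume (Prod.mk x ⁻¹' E) ∂ν := by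
        refine lintegral_congr_ae ?_
        filter_upwards [hg.ae_eq_mk, hh.ae_eq_mk] with x hgx hhx
        rw [hgx, hhx, ← Real.volume_Ico]
        rfl
    _ = ν.prod volume E := (Measure.prod_apply hE).symm
    _ = ∫⁻ t, ν ((fun x => (x, t)) ⁻¹' E) := Measure.prod_apply_symm hE
    _ = ∫⁻ t, ν {x | h x ≤ t ∧ t < g x} := by
        refine lintegral_congr fun t => measure_congr ?_
        filter_upwards [hg.ae_eq_mk, hh.ae_eq_mk] with x hgx hhx
        change (_ ∧ _) = (_ ∧ _)
        rw [hgx, hhx]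

theorem ofReal_measureReal_add_measureReal_sub_one_le {Ω : Type*} [MeasurableSpace Ω]
    {μ : Measure Ω} [IsProbabilityMeasure μ] (s : Set Ω) {t : Set Ω} (ht : MeasurableSet t) :
    ENNReal.ofReal (μ.real s + μ.real t - 1) ≤ μ (s ∩ t) := by
  refine ENNReal.ofReal_le_of_le_toReal ?_
  have := measureReal_union_add_inter (μ := μ) (s := s) ht
  have := measureReal_le_one (μ := μ) (s := s ∪ t)
  rw [← measureReal_def]
  linarith

theorem measure_preimage_eq_volume_of_map_eq {Ω : Type*} [MeasurableSpace Ω] {μ : Measure Ω}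
    {U : Ω → ℝ} (hU : Measurable U) (hUlaw : μ.map U = volume.restrict (Ioo 0 1)) {S : Set ℝ}
    (hS : MeasurableSet S) (hS01 : S ⊆ Ioo 0 1) : μ (U ⁻¹' S) = volume S := by
  rw [← Measure.map_apply hU hS, hUlaw, Measure.restrict_apply hS, inter_eq_left.2 hS01]

theorem min_volume_Ioo_le_volume_Ioo_inter_setOf_sub_le (m b c : ℝ) :
    min (volume (Ioo m b)) (ENNReal.ofReal c) ≤ volume (Ioo m b ∩ {u | b - u ≤ c}) := by
  rcases le_or_gt (b - c) m with h | h
  · refine (min_le_left _ _).trans (measure_mono fun u hu => ⟨hu, ?_⟩)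
    exact show b - u ≤ c by linarith [hu.1]
  · refine (min_le_right _ _).trans ?_
    calc ENNReal.ofReal c = volume (Ico (b - c) b) := by rw [Real.volume_Ico, sub_sub_cancel]
      _ ≤ _ := by
        refine measure_mono fun u hu => ⟨⟨h.trans_le hu.1, hu.2⟩, ?_⟩
        exact show b - u ≤ c by linarith [hu.1]

theorem volume_Ioo_inter_setOf_one_sub_add_le (m b c : ℝ) :
    volume (Ioo m b ∩ {u | 1 - b + u ≤ c}) ≤ ENNReal.ofReal (b - m + c - 1) := by
  calc volume (Ioo m b ∩ {u | 1 - b + u ≤ c}) ≤ volume (Ioc m (c - (1 - b))) :=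
        measure_mono fun u ⟨hu, hcu⟩ => ⟨hu.1, by linarith [show 1 - b + u ≤ c from hcu]⟩
    _ = ENNReal.ofReal (b - m + c - 1) := by rw [Real.volume_Ioc]; ring_nf

theorem integral_max_zero_eq_toReal_lintegral {X : Type*} [MeasurableSpace X] {μ : Measure X}
    {f : X → ℝ} (hf : AEStronglyMeasurable (fun x => max (f x) 0) μ) :
    ∫ x, max (f x) 0 ∂μ = (∫⁻ x, ENNReal.ofReal (f x) ∂μ).toReal := by
  rw [integral_eq_lintegral_of_nonneg_ae (f := fun x => max (f x) 0)
    (ae_of_all _ fun _ => le_max_right _ _) hf]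
  simp only [ENNReal.ofReal_max, ENNReal.ofReal_zero, max_eq_left zero_le]

theorem integral_max_zero_le_toReal_lintegral {X : Type*} [MeasurableSpace X] {μ : Measure X}
    (f : X → ℝ) : ∫ x, max (f x) 0 ∂μ ≤ (∫⁻ x, ENNReal.ofReal (f x) ∂μ).toReal := by
  by_cases hf : Integrable (fun x => max (f x) 0) μ
  · exact (integral_max_zero_eq_toReal_lintegral hf.1).le
  · rw [integral_undef hf]
    exact ENNReal.toReal_nonneg

theorem ofReal_intervalIntegral_max_zero {f : ℝ → ℝ} {a b : ℝ} (hab : a ≤ b)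
    (hf : IntervalIntegrable (fun u => max (f u) 0) volume a b) :
    ENNReal.ofReal (∫ u in a..b, max (f u) 0) = ∫⁻ u in Ioo a b, ENNReal.ofReal (f u) := by
  rw [intervalIntegral.integral_of_le hab, integral_Ioc_eq_integral_Ioo,
    ofReal_integral_eq_lintegral_ofReal (hf.1.mono_set Ioo_subset_Ioc_self)
      (ae_of_all _ fun _ => le_max_right _ _)]
  simp only [ENNReal.ofReal_max, ENNReal.ofReal_zero, max_eq_left zero_le]

section QuantileCoupling

variable {F F' : ℝ → ℝ} {a b : ℝ}

theorem IsCDF.lintegral_ofReal_quantile_comp_sub {X : Type*} [MeasurableSpace X] (ν : Measure X)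
    [SFinite ν] (hF : IsCDF F) {V h : X → ℝ} (hV : Measurable V)
    (hh : AEMeasurable h (ν.restrict (V ⁻¹' Ioo a b))) (ha : 0 ≤ a) (hb : b ≤ 1) :
    ∫⁻ x in V ⁻¹' Ioo a b, ENNReal.ofReal (quantile F (V x) - h x) ∂ν =
      ∫⁻ t, ν (V ⁻¹' Ioo (max a (F t)) b ∩ {x | h x ≤ t}) := by
  have hV01 : ∀ᵐ x ∂ν.restrict (V ⁻¹' Ioo a b), V x ∈ Ioo 0 1 :=
    ae_restrict_of_forall_mem (hV measurableSet_Ioo) fun x hx => Ioo_subset_Ioo ha hb hx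
  rw [lintegral_ofReal_sub_eq_lintegral_measure (hF.aemeasurable_quantile_comp hV hV01) hh]
  refine lintegral_congr fun t => ?_
  rw [Measure.restrict_apply' (hV measurableSet_Ioo)]
  congr 1
  ext x
  simp only [mem_inter_iff, mem_ofPred_eq, mem_preimage, ← hF.lt_quantile_and_mem_Ioo_iff ha hb]
  tauto

theorem IsCDF.lintegral_ofReal_quantile_sub_quantile_comp (hF : IsCDF F) (hF' : IsCDF F')
    {φ : ℝ → ℝ} (hφ : Measurable φ) (hφ01 : MapsTo φ (Ioo a b) (Ioo 0 1)) (ha : 0 ≤ a)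
    (hb : b ≤ 1) :
    ∫⁻ u in Ioo a b, ENNReal.ofReal (quantile F u - quantile F' (φ u)) =
      ∫⁻ t, volume (Ioo (max a (F t)) b ∩ {u | φ u ≤ F' t}) := by
  have hQφ : AEMeasurable (fun u => quantile F' (φ u)) (volume.restrict (Ioo a b)) :=
    hF'.aemeasurable_quantile_comp hφ (ae_restrict_of_forall_mem measurableSet_Ioo hφ01)
  refine (hF.lintegral_ofReal_quantile_comp_sub volume measurable_id hQφ ha hb).trans
    (lintegral_congr fun t => congr_arg volume ?_)
  ext u
  simp only [preimage_id, mem_inter_iff, mem_ofPred_eq]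
  refine and_congr_right fun hu => hF'.quantile_le_iff (hφ01 ?_) t
  exact Ioo_subset_Ioo (le_max_left _ _) le_rfl hu

end QuantileCoupling

theorem lintegral_ofReal_quantile_sub_bounds {Ω : Type*} [MeasurableSpace Ω] {μ : Measure Ω}
    [IsProbabilityMeasure μ] {U Y : Ω → ℝ} {F₀ F₁ : ℝ → ℝ} {a b : ℝ} (hF₀ : IsCDF F₀)
    (hF₁ : IsCDF F₁) (hU : Measurable U) (hUlaw : μ.map U = volume.restrict (Ioo 0 1))
    (hY : Measurable Y) (hYlaw : ∀ y, (μ {ω | Y ω ≤ y}).toReal = F₁ y) (ha : 0 ≤ a)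
    (hb : b ≤ 1) :
    ∫⁻ u in Ioo a b, ENNReal.ofReal (quantile F₀ u - quantile F₁ (1 - b + u)) ≤
        ∫⁻ ω in U ⁻¹' Ioo a b, ENNReal.ofReal (quantile F₀ (U ω) - Y ω) ∂μ ∧
      ∫⁻ ω in U ⁻¹' Ioo a b, ENNReal.ofReal (quantile F₀ (U ω) - Y ω) ∂μ ≤
        ∫⁻ u in Ioo a b, ENNReal.ofReal (quantile F₀ u - quantile F₁ (b - u)) := by
  have hP : ∀ t, μ (U ⁻¹' Ioo (max a (F₀ t)) b) = volume (Ioo (max a (F₀ t)) b) := fun t =>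
    measure_preimage_eq_volume_of_map_eq hU hUlaw measurableSet_Ioo
      (Ioo_subset_Ioo (ha.trans (le_max_left _ _)) hb)
  rw [hF₀.lintegral_ofReal_quantile_comp_sub μ hU hY.aemeasurable ha hb,
    hF₀.lintegral_ofReal_quantile_sub_quantile_comp hF₁ (φ := (1 - b + ·)) (by fun_prop)
      (fun u hu => ⟨by linarith [hu.1], by linarith [hu.2]⟩) ha hb,
    hF₀.lintegral_ofReal_quantile_sub_quantile_comp hF₁ (φ := (b - ·)) (by fun_prop)
      (fun u hu => ⟨by linarith [hu.2], by linarith [hu.1]⟩) ha hb]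
  constructor
  · refine lintegral_mono fun t => (volume_Ioo_inter_setOf_one_sub_add_le _ _ _).trans ?_
    refine le_trans (ENNReal.ofReal_le_ofReal ?_)
      (ofReal_measureReal_add_measureReal_sub_one_le _ (hY measurableSet_Iic))
    rw [measureReal_def, measureReal_def, hP, hYlaw, Real.volume_Ioo, ENNReal.toReal_ofReal']
    linarith [le_max_left (b - max a (F₀ t)) 0]
  · refine lintegral_mono fun t => ?_
    calc _ ≤ min (μ (U ⁻¹' Ioo (max a (F₀ t)) b)) (μ {ω | Y ω ≤ t}) :=
          le_min (measure_mono inter_subset_left) (measure_mono inter_subset_right)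
      _ = min (volume (Ioo (max a (F₀ t)) b)) (ENNReal.ofReal (F₁ t)) := by
          rw [hP, ← hYlaw, ENNReal.ofReal_toReal (measure_ne_top _ _)]
      _ ≤ _ := min_volume_Ioo_le_volume_Ioo_inter_setOf_sub_le _ _ _

theorem subgroup_negative_part_bounds_general
    {Ω : Type*} [MeasurableSpace Ω] (μ : Measure Ω) [IsProbabilityMeasure μ]
    (U Y1 : Ω → ℝ) (F0 F1 Q0 Q1 : ℝ → ℝ)
    (hF0 : IsCDF F0) (hF1 : IsCDF F1)
    (hQ0 : ∀ u, Q0 u = sInf {y : ℝ | u ≤ F0 y})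
    (hQ1 : ∀ u, Q1 u = sInf {y : ℝ | u ≤ F1 y})
    (hU : Measurable U) (hUlaw : μ.map U = volume.restrict (Set.Ioo (0:ℝ) 1))
    (hY1 : Measurable Y1) (hY1law : ∀ y, (μ {ω | Y1 ω ≤ y}).toReal = F1 y)
    (a b : ℝ) (ha : 0 ≤ a) (hab : a < b) (hb : b ≤ 1)
    (hintU : IntervalIntegrable (fun u => max (Q0 u - Q1 (b - u)) 0) volume a b) :
    (∫ u in a..b, max (Q0 u - Q1 (1 - b + u)) 0) ≤
        (∫ ω in {ω | a < U ω ∧ U ω < b}, max (Q0 (U ω) - Y1 ω) 0 ∂μ) ∧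
      (∫ ω in {ω | a < U ω ∧ U ω < b}, max (Q0 (U ω) - Y1 ω) 0 ∂μ) ≤
        ∫ u in a..b, max (Q0 u - Q1 (b - u)) 0 := by
  obtain rfl : Q0 = quantile F0 := funext hQ0
  obtain rfl : Q1 = quantile F1 := funext hQ1
  obtain ⟨hlow, hup⟩ := lintegral_ofReal_quantile_sub_bounds hF0 hF1 hU hUlaw hY1 hY1law ha hb
  have hQU : AEMeasurable (fun ω => quantile F0 (U ω)) (μ.restrict (U ⁻¹' Ioo a b)) :=
    hF0.aemeasurable_quantile_comp hU
      (ae_restrict_of_forall_mem (hU measurableSet_Ioo) fun _ hω => Ioo_subset_Ioo ha hb hω)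
  have hmid : ∫ ω in {ω | a < U ω ∧ U ω < b}, max (quantile F0 (U ω) - Y1 ω) 0 ∂μ =
      (∫⁻ ω in U ⁻¹' Ioo a b, ENNReal.ofReal (quantile F0 (U ω) - Y1 ω) ∂μ).toReal :=
    integral_max_zero_eq_toReal_lintegral
      ((hQU.sub hY1.aemeasurable).max aemeasurable_const).aestronglyMeasurable
  rw [← ofReal_intervalIntegral_max_zero hab.le hintU] at hup
  rw [hmid, intervalIntegral.integral_of_le hab.le, integral_Ioc_eq_integral_Ioo]
  exact ⟨(integral_max_zero_le_toReal_lintegral _).trans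
      (ENNReal.toReal_mono (hup.trans_lt ENNReal.ofReal_lt_top).ne hlow),
    ENNReal.toReal_le_of_le_ofReal
      (intervalIntegral.integral_nonneg hab.le fun _ _ => le_max_right _ _) hup⟩

theorem subgroup_negative_part_bounds
    {Ω : Type*} [MeasurableSpace Ω] (μ : Measure Ω) [IsProbabilityMeasure μ]
    (U Y1 : Ω → ℝ) (F0 F1 Q0 Q1 : ℝ → ℝ)
    (hF0 : IsCDF F0) (hF1 : IsCDF F1)
    (hQ0 : ∀ u, Q0 u = sInf {y : ℝ | u ≤ F0 y})
    (hQ1 : ∀ u, Q1 u = sInf {y : ℝ | u ≤ F1 y})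
    (hU : Measurable U) (hUlaw : μ.map U = volume.restrict (Set.Ioo (0:ℝ) 1))
    (hY1 : Measurable Y1) (hY1law : ∀ y, (μ {ω | Y1 ω ≤ y}).toReal = F1 y)
    (a b : ℝ) (ha : 0 ≤ a) (hab : a < b) (hb : b ≤ 1)
    (hint : IntegrableOn (fun ω => max (Q0 (U ω) - Y1 ω) 0) {ω | a < U ω ∧ U ω < b} μ)
    (hintL : IntervalIntegrable (fun u => max (Q0 u - Q1 (1 - b + u)) 0) volume a b)
    (hintU : IntervalIntegrable (fun u => max (Q0 u - Q1 (b - u)) 0) volume a b) :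
    (∫ u in a..b, max (Q0 u - Q1 (1 - b + u)) 0) ≤
        (∫ ω in {ω | a < U ω ∧ U ω < b}, max (Q0 (U ω) - Y1 ω) 0 ∂μ) ∧
      (∫ ω in {ω | a < U ω ∧ U ω < b}, max (Q0 (U ω) - Y1 ω) 0 ∂μ) ≤
        ∫ u in a..b, max (Q0 u - Q1 (b - u)) 0 :=
  subgroup_negative_part_bounds_general μ U Y1 F0 F1 Q0 Q1 hF0 hF1 hQ0 hQ1 hU hUlaw hY1 hY1law a b
    ha hab hb hintU
end
end
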